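/- arXiv:2206.13283 — 3 statements merged into one kernel-verified Lean document; each statement's English description precedes it below -/
import Mathlib

section
/- For the compound Poisson-geometric family with α > 0, q ∈ (0,1), the Taylor's law exponent b = 1 + log(1 + α/q)/log(αp/q) (with p = 1-q) satisfies: b diverges exactly when q = α/(1+α); and the unique zero q₀ ∈ (0,1) of f(q) = (1+α)q² - qα(1-α) - α² satisfies q₀ > α/(1+α). -/
/-!
The mean `α(1-q)/q` equals `1` exactly at `q = α/(1+α)`. The quadratic
`f(q) = (1+α)q² - qα(1-α) - α²` is negative at `α/(1+α)` and equals `1` at `q = 1`, so the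
intermediate value theorem gives a zero in `(α/(1+α), 1)`. Since `f(0) = -α² < 0`, Vieta's formula
for the product of the roots rules out a second positive zero.
-/

open Set

theorem mul_one_sub_div_eq_one_iff {α q : ℝ} (hq : q ≠ 0) (hα : 1 + α ≠ 0) :
    α * (1 - q) / q = 1 ↔ q = α / (1 + α) := by
  rw [div_eq_one_iff_eq hq, eq_div_iff hα]
  constructor <;> intro h <;> linarith

theorem eq_of_quadratic_eq_zero_of_pos {a b c x y : ℝ} (ha : 0 ≤ a) (hc : c < 0)
    (hx : 0 < x) (hy : 0 < y) (hfx : a * x ^ 2 + b * x + c = 0) (hfy : a * y ^ 2 + b * y + c = 0) :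
    x = y := by
  by_contra hxy
  have hb : a * (x + y) + b = 0 := by
    have h : (x - y) * (a * (x + y) + b) = 0 := by linear_combination hfx - hfy
    exact (mul_eq_zero.mp h).resolve_left (sub_ne_zero.mpr hxy)
  have hc' : c = a * (x * y) := by linear_combination hfx - x * hb
  nlinarith [mul_nonneg ha (mul_pos hx hy).le]

def poissonGeometricQuadratic (α q : ℝ) : ℝ :=
  (1 + α) * q ^ 2 - q * α * (1 - α) - α ^ 2

theorem poissonGeometricQuadratic_div_one_add {α : ℝ} (hα : 1 + α ≠ 0) :
    poissonGeometricQuadratic α (α / (1 + α)) = -α ^ 2 / (1 + α) := by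
  unfold poissonGeometricQuadratic
  field_simp
  ring

theorem poissonGeometricQuadratic_one (α : ℝ) : poissonGeometricQuadratic α 1 = 1 := by
  unfold poissonGeometricQuadratic
  ring

theorem exists_poissonGeometricQuadratic_eq_zero {α : ℝ} (hα : 0 < α) :
    ∃ q ∈ Ioo (α / (1 + α)) 1, poissonGeometricQuadratic α q = 0 := by
  have h1α : 0 < 1 + α := by linarith
  have hle : α / (1 + α) ≤ 1 := (div_lt_one h1α).mpr (by linarith) |>.le
  have hcont : ContinuousOn (poissonGeometricQuadratic α) (Icc (α / (1 + α)) 1) := by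
    unfold poissonGeometricQuadratic
    fun_prop
  apply intermediate_value_Ioo hle hcont
  rw [poissonGeometricQuadratic_div_one_add h1α.ne', poissonGeometricQuadratic_one]
  exact ⟨div_neg_of_neg_of_pos (neg_neg_of_pos (by positivity)) h1α, one_pos⟩

theorem poissonGeometricQuadratic_eq_zero_unique {α q q' : ℝ} (hα : 0 < α) (hq : 0 < q)
    (hq' : 0 < q') (hfq : poissonGeometricQuadratic α q = 0)
    (hfq' : poissonGeometricQuadratic α q' = 0) : q = q' := by
  unfold poissonGeometricQuadratic at hfq hfq'
  refine eq_of_quadratic_eq_zero_of_pos (a := 1 + α) (b := -(α * (1 - α))) (c := -α ^ 2)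
    (by linarith) (neg_neg_of_pos (by positivity)) hq hq' ?_ ?_
  · linear_combination hfq
  · linear_combination hfq'

/-- For the compound Poisson-geometric family with α > 0, q ∈ (0,1), p = 1-q:
the Taylor's law exponent b = 1 + log(1+α/q)/log(αp/q) diverges exactly when
μ = αp/q = 1, i.e. q = α/(1+α); and the quadratic f(q) = (1+α)q² - qα(1-α) - α²
has a unique zero q₀ in (0,1), which satisfies q₀ > α/(1+α). -/
theorem compound_poisson_geometric_exponent (α : ℝ) (hα : 0 < α) :
    (∀ q ∈ Set.Ioo (0 : ℝ) 1, α * (1 - q) / q = 1 ↔ q = α / (1 + α)) ∧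
    ∃ q₀ : ℝ, (q₀ ∈ Set.Ioo (0 : ℝ) 1 ∧
        (1 + α) * q₀ ^ 2 - q₀ * α * (1 - α) - α ^ 2 = 0) ∧
      (∀ q' : ℝ, q' ∈ Set.Ioo (0 : ℝ) 1 →
        (1 + α) * q' ^ 2 - q' * α * (1 - α) - α ^ 2 = 0 → q' = q₀) ∧
      α / (1 + α) < q₀ := by
  refine ⟨fun q hq => mul_one_sub_div_eq_one_iff hq.1.ne' (by linarith), ?_⟩
  obtain ⟨q₀, ⟨hlt, hq₀1⟩, hf⟩ := exists_poissonGeometricQuadratic_eq_zero hα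
  have hq₀ : 0 < q₀ := lt_trans (by positivity) hlt
  exact ⟨q₀, ⟨⟨hq₀, hq₀1⟩, hf⟩,
    fun q' hq' hf' => poissonGeometricQuadratic_eq_zero_unique hα hq'.1 hq₀ hf' hf, hlt⟩
end

section
/- For the Pólya-Aeppli family with α ≥ 2 and every q ∈ (0,1), the Taylor's law exponent b = 1 + log((1+p)/q)/log(α/q) (with p = 1-q) lies in the interval (1, 2]. -/
/-- For the Pólya-Aeppli family with α ≥ 2, for every q ∈ (0,1) (with p = 1-q),
the Taylor's law exponent b = 1 + log((1+p)/q)/log(α/q) lies in (1, 2]. -/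
theorem polya_aeppli_exponent_range (α : ℝ) (hα : 2 ≤ α) :
    ∀ q ∈ Set.Ioo (0 : ℝ) 1,
      1 + Real.log ((1 + (1 - q)) / q) / Real.log (α / q) ∈ Set.Ioc (1 : ℝ) 2 := by
  rintro q ⟨hq0, hq1⟩
  have h2q : (1:ℝ) < (1 + (1 - q)) / q := by
    rw [lt_div_iff₀ hq0]; linarith
  have hαq : (1:ℝ) < α / q := by
    rw [lt_div_iff₀ hq0]; nlinarith
  have hlog1 : 0 < Real.log ((1 + (1 - q)) / q) := Real.log_pos h2q
  have hlog2 : 0 < Real.log (α / q) := Real.log_pos hαq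
  constructor
  · have : 0 < Real.log ((1 + (1 - q)) / q) / Real.log (α / q) := div_pos hlog1 hlog2
    linarith
  · have hle : Real.log ((1 + (1 - q)) / q) ≤ Real.log (α / q) := by
      apply Real.log_le_log (by positivity)
      gcongr
      linarith
    have : Real.log ((1 + (1 - q)) / q) / Real.log (α / q) ≤ 1 :=
      (div_le_one hlog2).mpr hle
    linarith
end

section
/- For a Tweedie distribution with α < 0 and θ > 0, define L(λ) = ((1-α)/α)·((θ+λ)/(1-α))^α - ((1-α)/α)·(θ/(1-α))^α and L₀(λ) = λ·L'(λ) = (1-α)^{1-α}·λ·(θ+λ)^{α-1}. Then L₀'(λ) = (1-α)^{1-α}(θ+λ)^{α-2}(θ + λα), which is negative for λ > -θ/α and positive for 0 < λ < -θ/α; in particular L₀' is not nonnegative on all of (0,∞), so L₀' is not completely monotone. -/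
/-! Differentiating `c · λ · (θ + λ)^(α - 1)` gives `c · (θ + λ)^(α - 2) · (θ + λα)`, whose sign
is that of the affine factor `θ + λα`. For `α < 0` this factor decreases through zero at
`λ = -θ/α > 0`, so `L₀'` takes negative values on `(0, ∞)`, which a completely monotone function
cannot do. -/

open Real

theorem hasDerivAt_mul_mul_add_rpow_sub_one {α θ l : ℝ} (c : ℝ) (hθl : 0 < θ + l) :
    HasDerivAt (fun x : ℝ => c * x * (θ + x) ^ (α - 1))
      (c * (θ + l) ^ (α - 2) * (θ + l * α)) l := by
  have hpow : HasDerivAt (fun x : ℝ => (θ + x) ^ (α - 1))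
      ((α - 1) * (θ + l) ^ (α - 1 - 1) * 1) l :=
    (hasDerivAt_rpow_const (Or.inl hθl.ne')).comp l ((hasDerivAt_id l).const_add θ)
  have hlin : HasDerivAt (fun x : ℝ => c * x) c l := by
    simpa using (hasDerivAt_id l).const_mul c
  refine (hlin.mul hpow).congr_deriv ?_
  have hsplit : (θ + l) ^ (α - 1) = (θ + l) ^ (α - 2) * (θ + l) := by
    rw [← rpow_add_one hθl.ne']
    ring_nf
  rw [hsplit, show α - 1 - 1 = α - 2 by ring]
  ring

theorem add_mul_neg_of_neg_div_lt {α θ l : ℝ} (hα : α < 0) (hl : -θ / α < l) :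
    θ + l * α < 0 := by
  have := (div_lt_iff_of_neg hα).mp hl
  linarith

theorem add_mul_pos_of_lt_neg_div {α θ l : ℝ} (hα : α < 0) (hl : l < -θ / α) :
    0 < θ + l * α := by
  have := (lt_div_iff_of_neg hα).mp hl
  linarith

/-- For a Tweedie distribution with α < 0 and θ > 0, with
L₀(λ) = (1-α)^{1-α}·λ·(θ+λ)^{α-1}, the derivative is
L₀'(λ) = (1-α)^{1-α}(θ+λ)^{α-2}(θ+λα), which is negative for λ > -θ/α and
positive for 0 < λ < -θ/α; in particular L₀' is not nonnegative on all of
(0,∞), so L₀' is not completely monotone. -/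
theorem tweedie_not_self_decomposable (α θ : ℝ) (hα : α < 0) (hθ : 0 < θ)
    (L₀ : ℝ → ℝ)
    (hL₀ : ∀ l : ℝ, L₀ l = (1 - α) ^ (1 - α) * l * (θ + l) ^ (α - 1)) :
    (∀ l : ℝ, 0 < l →
      deriv L₀ l = (1 - α) ^ (1 - α) * (θ + l) ^ (α - 2) * (θ + l * α)) ∧
    (∀ l : ℝ, -θ / α < l → deriv L₀ l < 0) ∧
    (∀ l : ℝ, 0 < l → l < -θ / α → 0 < deriv L₀ l) ∧
    ¬(∀ l : ℝ, 0 < l → 0 ≤ deriv L₀ l) := by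
  have hc : 0 < (1 - α) ^ (1 - α) := rpow_pos_of_pos (by linarith) _
  have hcrit : 0 < -θ / α := div_pos_of_neg_of_neg (by linarith) hα
  have hderiv : ∀ l : ℝ, 0 < l →
      deriv L₀ l = (1 - α) ^ (1 - α) * (θ + l) ^ (α - 2) * (θ + l * α) := fun l hl => by
    rw [funext hL₀]
    exact (hasDerivAt_mul_mul_add_rpow_sub_one _ (by linarith)).deriv
  have hneg : ∀ l : ℝ, -θ / α < l → deriv L₀ l < 0 := fun l hl => by
    have hθl : 0 < θ + l := by linarith
    rw [hderiv l (hcrit.trans hl)]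
    exact mul_neg_of_pos_of_neg (by positivity) (add_mul_neg_of_neg_div_lt hα hl)
  refine ⟨hderiv, hneg, fun l hl hlcrit => ?_, fun hnonneg => ?_⟩
  · have hθl : 0 < θ + l := by linarith
    have := add_mul_pos_of_lt_neg_div hα hlcrit
    rw [hderiv l hl]
    positivity
  · exact (hnonneg _ (by linarith)).not_gt (hneg _ (lt_add_one _))
end
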